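/- For every sign vector ε and every integer 1 ≤ i ≤ n (n ≥ 1), the open join σ^ε_{≤i} ∗ₒ σ^ε_{>i} of the two coordinate simplices equals Y^ε_i; that is, { (t·a + (1−t)·b)/‖t·a + (1−t)·b‖ : a ∈ σ^ε_{≤i}, b ∈ σ^ε_{>i}, t ∈ (0,1) } = { v ∈ S^n : ε_k·v_k ≥ 0 for all k, v_k ≠ 0 for some k ≤ i, and v_k ≠ 0 for some k ≥ i+1 }. -/

import Mathlib

/-!
The first `i` coordinates of `t • a + (1 - t) • b` are those of `t • a` and the others those of
`(1 - t) • b`, so its normalisation keeps the sign conditions and has a nonzero coordinate on each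
side. Conversely, a point `w` of `Y^ε_i` is the sum `x + y` of its two coordinate parts, both
nonzero, and for `t = ‖x‖ / (‖x‖ + ‖y‖)` the combination `t • normalize x + (1 - t) • normalize y`
is `(‖x‖ + ‖y‖)⁻¹ • w`, whose normalisation is `w`.
-/

noncomputable section

open Set

/-- The brick `Y^ε_i ⊆ S^n` (indices of coordinates are 0-based, so the
1-based condition `k ≤ i` becomes `(k : ℕ) < i`, and `k ≥ i+1` becomes `i ≤ (k : ℕ)`). -/
def Ybrick (n : ℕ) (ε : Fin (n + 1) → ℝ) (i : ℕ) : Set (EuclideanSpace ℝ (Fin (n + 1))) :=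
  {v | ‖v‖ = 1 ∧ (∀ k, 0 ≤ ε k * v k) ∧
    (∃ k : Fin (n + 1), (k : ℕ) < i ∧ v k ≠ 0) ∧
    (∃ k : Fin (n + 1), i ≤ (k : ℕ) ∧ v k ≠ 0)}

/-- The closed coordinate simplex `σ^ε_{≤ i}`. -/
def sigmaLow (n : ℕ) (ε : Fin (n + 1) → ℝ) (i : ℕ) : Set (EuclideanSpace ℝ (Fin (n + 1))) :=
  {v | ‖v‖ = 1 ∧ (∀ k, 0 ≤ ε k * v k) ∧ ∀ k : Fin (n + 1), i ≤ (k : ℕ) → v k = 0}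

/-- The closed coordinate simplex `σ^ε_{> i}`. -/
def sigmaHigh (n : ℕ) (ε : Fin (n + 1) → ℝ) (i : ℕ) : Set (EuclideanSpace ℝ (Fin (n + 1))) :=
  {v | ‖v‖ = 1 ∧ (∀ k, 0 ≤ ε k * v k) ∧ ∀ k : Fin (n + 1), (k : ℕ) < i → v k = 0}

open NormedSpace

/-- The open join `A ∗ₒ B`. -/
def openJoin {V : Type*} [NormedAddCommGroup V] [NormedSpace ℝ V] (A B : Set V) : Set V :=
  {w | ∃ a ∈ A, ∃ b ∈ B, ∃ t ∈ Ioo (0 : ℝ) 1, w = normalize (t • a + (1 - t) • b)}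

namespace NormedSpace

variable {V : Type*} [NormedAddCommGroup V] [NormedSpace ℝ V]

theorem smul_normalize_add_smul_normalize {x y : V} (hx : x ≠ 0) :
    (‖x‖ / (‖x‖ + ‖y‖)) • normalize x + (1 - ‖x‖ / (‖x‖ + ‖y‖)) • normalize y =
      (‖x‖ + ‖y‖)⁻¹ • (x + y) := by
  have hX : 0 < ‖x‖ := norm_pos_iff.2 hx
  have hS : ‖x‖ + ‖y‖ ≠ 0 := by positivity
  have hy : (1 - ‖x‖ / (‖x‖ + ‖y‖)) • normalize y = (‖x‖ + ‖y‖)⁻¹ • y := by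
    rw [one_sub_div hS, add_sub_cancel_left, div_eq_inv_mul, mul_smul, norm_smul_normalize]
  rw [hy, div_eq_inv_mul, mul_smul, norm_smul_normalize, smul_add]

theorem exists_mem_Ioo_normalize_eq_normalize_add {x y : V} (hx : x ≠ 0) (hy : y ≠ 0) :
    ∃ t ∈ Ioo (0 : ℝ) 1, normalize (t • normalize x + (1 - t) • normalize y) = normalize (x + y) := by
  have hX : 0 < ‖x‖ := norm_pos_iff.2 hx
  have hY : 0 < ‖y‖ := norm_pos_iff.2 hy
  refine ⟨‖x‖ / (‖x‖ + ‖y‖), ⟨by positivity, (div_lt_one (by positivity)).2 (by linarith)⟩, ?_⟩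
  rw [smul_normalize_add_smul_normalize hx, normalize_smul_of_pos (by positivity)]

end NormedSpace

section Coordinates

variable {ι : Type*}

theorem EuclideanSpace.exists_apply_ne_zero {x : EuclideanSpace ℝ ι} (hx : x ≠ 0) :
    ∃ k, x k ≠ 0 :=
  Function.ne_iff.1 ((WithLp.ofLp_eq_zero 2).not.2 hx)

theorem normalize_apply_eq_zero_iff [Fintype ι] {x : EuclideanSpace ℝ ι} {k : ι} :
    normalize x k = 0 ↔ x k = 0 := by
  by_cases hx : x = 0
  · simp [hx]
  · simp [NormedSpace.normalize, hx]

theorem mul_normalize_apply_nonneg [Fintype ι] {x : EuclideanSpace ℝ ι} {c : ℝ} {k : ι}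
    (h : 0 ≤ c * x k) : 0 ≤ c * normalize x k := by
  simpa only [NormedSpace.normalize, PiLp.smul_apply, smul_eq_mul, mul_left_comm c] using
    mul_nonneg (inv_nonneg.2 (norm_nonneg x)) h

def coordRestrict (s : Set ι) (w : EuclideanSpace ℝ ι) : EuclideanSpace ℝ ι :=
  WithLp.toLp 2 (s.indicator w)

theorem coordRestrict_apply (s : Set ι) (w : EuclideanSpace ℝ ι) (k : ι) :
    coordRestrict s w k = s.indicator w k :=
  rfl

theorem coordRestrict_add_coordRestrict_compl (s : Set ι) (w : EuclideanSpace ℝ ι) :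
    coordRestrict s w + coordRestrict sᶜ w = w := by
  ext k
  simp only [PiLp.add_apply, coordRestrict_apply, indicator_self_add_compl_apply]

theorem mul_coordRestrict_apply_nonneg {s : Set ι} {w : EuclideanSpace ℝ ι} {c : ℝ} {k : ι}
    (h : 0 ≤ c * w k) : 0 ≤ c * coordRestrict s w k := by
  rw [coordRestrict_apply]
  by_cases hk : k ∈ s <;> simp [hk, h]

theorem coordRestrict_ne_zero {s : Set ι} {w : EuclideanSpace ℝ ι} {k : ι} (hk : k ∈ s)
    (hwk : w k ≠ 0) : coordRestrict s w ≠ 0 := fun h ↦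
  hwk (by simpa [coordRestrict_apply, hk] using congrArg (· k) h)

end Coordinates

section Bricks

variable {n : ℕ} {ε : Fin (n + 1) → ℝ} {i : ℕ}

theorem exists_apply_ne_zero_of_mem_sigmaLow {a : EuclideanSpace ℝ (Fin (n + 1))}
    (ha : a ∈ sigmaLow n ε i) : ∃ k : Fin (n + 1), (k : ℕ) < i ∧ a k ≠ 0 := by
  obtain ⟨k, hk⟩ := EuclideanSpace.exists_apply_ne_zero (norm_ne_zero_iff.1 (ha.1 ▸ one_ne_zero))
  exact ⟨k, not_le.1 fun hik ↦ hk (ha.2.2 k hik), hk⟩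

theorem exists_apply_ne_zero_of_mem_sigmaHigh {b : EuclideanSpace ℝ (Fin (n + 1))}
    (hb : b ∈ sigmaHigh n ε i) : ∃ k : Fin (n + 1), i ≤ (k : ℕ) ∧ b k ≠ 0 := by
  obtain ⟨k, hk⟩ := EuclideanSpace.exists_apply_ne_zero (norm_ne_zero_iff.1 (hb.1 ▸ one_ne_zero))
  exact ⟨k, not_lt.1 fun hki ↦ hk (hb.2.2 k hki), hk⟩

theorem normalize_mem_Ybrick {u : EuclideanSpace ℝ (Fin (n + 1))}
    (hsign : ∀ k, 0 ≤ ε k * u k) (hlow : ∃ k : Fin (n + 1), (k : ℕ) < i ∧ u k ≠ 0)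
    (hhigh : ∃ k : Fin (n + 1), i ≤ (k : ℕ) ∧ u k ≠ 0) : normalize u ∈ Ybrick n ε i := by
  obtain ⟨l, hli, hl⟩ := hlow
  obtain ⟨h, hih, hh⟩ := hhigh
  have hu : u ≠ 0 := fun hu ↦ hl (by simp [hu])
  exact ⟨norm_normalize hu, fun k ↦ mul_normalize_apply_nonneg (hsign k),
    ⟨l, hli, normalize_apply_eq_zero_iff.not.2 hl⟩, ⟨h, hih, normalize_apply_eq_zero_iff.not.2 hh⟩⟩

theorem normalize_mem_sigmaLow {v : EuclideanSpace ℝ (Fin (n + 1))} (hv : v ≠ 0)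
    (hsign : ∀ k, 0 ≤ ε k * v k) (hzero : ∀ k : Fin (n + 1), i ≤ (k : ℕ) → v k = 0) :
    normalize v ∈ sigmaLow n ε i :=
  ⟨norm_normalize hv, fun k ↦ mul_normalize_apply_nonneg (hsign k),
    fun k hk ↦ normalize_apply_eq_zero_iff.2 (hzero k hk)⟩

theorem normalize_mem_sigmaHigh {v : EuclideanSpace ℝ (Fin (n + 1))} (hv : v ≠ 0)
    (hsign : ∀ k, 0 ≤ ε k * v k) (hzero : ∀ k : Fin (n + 1), (k : ℕ) < i → v k = 0) :
    normalize v ∈ sigmaHigh n ε i :=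
  ⟨norm_normalize hv, fun k ↦ mul_normalize_apply_nonneg (hsign k),
    fun k hk ↦ normalize_apply_eq_zero_iff.2 (hzero k hk)⟩

theorem openJoin_sigmaLow_sigmaHigh_subset_Ybrick :
    openJoin (sigmaLow n ε i) (sigmaHigh n ε i) ⊆ Ybrick n ε i := by
  rintro _ ⟨a, ha, b, hb, t, ⟨ht0, ht1⟩, rfl⟩
  have hcoord : ∀ k, (t • a + (1 - t) • b) k = t * a k + (1 - t) * b k := fun k ↦ rfl
  obtain ⟨l, hli, hl⟩ := exists_apply_ne_zero_of_mem_sigmaLow ha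
  obtain ⟨h, hih, hh⟩ := exists_apply_ne_zero_of_mem_sigmaHigh hb
  refine normalize_mem_Ybrick (fun k ↦ ?_) ⟨l, hli, ?_⟩ ⟨h, hih, ?_⟩
  · rw [hcoord, mul_add, mul_left_comm, mul_left_comm (ε k)]
    exact add_nonneg (mul_nonneg ht0.le (ha.2.1 k)) (mul_nonneg (by linarith) (hb.2.1 k))
  · rw [hcoord, hb.2.2 l hli, mul_zero, add_zero]
    exact mul_ne_zero ht0.ne' hl
  · rw [hcoord, ha.2.2 h hih, mul_zero, zero_add]
    exact mul_ne_zero (by linarith) hh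

theorem Ybrick_subset_openJoin_sigmaLow_sigmaHigh :
    Ybrick n ε i ⊆ openJoin (sigmaLow n ε i) (sigmaHigh n ε i) := by
  rintro w ⟨hw, hsign, ⟨l, hli, hl⟩, ⟨h, hih, hh⟩⟩
  set s : Set (Fin (n + 1)) := {k | (k : ℕ) < i}
  have hx := coordRestrict_ne_zero (s := s) hli hl
  have hy := coordRestrict_ne_zero (s := sᶜ) (not_lt.2 hih) hh
  obtain ⟨t, ht, hjoin⟩ := exists_mem_Ioo_normalize_eq_normalize_add hx hy
  refine ⟨normalize (coordRestrict s w),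
    normalize_mem_sigmaLow hx (fun k ↦ mul_coordRestrict_apply_nonneg (hsign k)) fun k hk ↦ ?_,
    normalize (coordRestrict sᶜ w),
    normalize_mem_sigmaHigh hy (fun k ↦ mul_coordRestrict_apply_nonneg (hsign k)) fun k hk ↦ ?_,
    t, ht, ?_⟩
  · simp [coordRestrict_apply, s, hk]
  · simp [coordRestrict_apply, s, hk]
  · rw [hjoin, coordRestrict_add_coordRestrict_compl, normalize_eq_self_of_norm_eq_one hw]

end Bricks

theorem openJoin_sigmaLow_sigmaHigh_eq_Ybrick (n : ℕ) (ε : Fin (n + 1) → ℝ) (i : ℕ) :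
    {w : EuclideanSpace ℝ (Fin (n + 1)) |
      ∃ a ∈ sigmaLow n ε i, ∃ b ∈ sigmaHigh n ε i, ∃ t : ℝ, t ∈ Ioo (0 : ℝ) 1 ∧
        w = ‖t • a + (1 - t) • b‖⁻¹ • (t • a + (1 - t) • b)} = Ybrick n ε i :=
  openJoin_sigmaLow_sigmaHigh_subset_Ybrick.antisymm Ybrick_subset_openJoin_sigmaLow_sigmaHigh
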